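/- arXiv:2506.13388 — 6 statements merged into one kernel-verified Lean document; each statement's English description precedes it below -/
import Mathlib

section
/- The expected value of $\log\|O - O'\|_F^{-1}$, where $O, O'$ are chosen independently and uniformly with respect to the Haar measure on $\mathrm{SO}(3)$, equals $-(1+\log 2)/2$. Equivalently, $\frac{2}{\pi}\int_0^\pi \log(\sqrt{8}\sin(\theta/2))\sin^2(\theta/2)\,d\theta = \frac{1+\log 2}{2}$. -/
open Real MeasureTheory intervalIntegral

/-! Substituting `θ = 2x` and splitting `log (√8 sin x) = log √8 + log (sin x)` reduces the claim
to `∫₀^{π/2} log (sin x) sin² x dx = π/8 - (π/4) log 2`. Writing `sin² x = (1 - cos 2x)/2`, this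
follows from the classical `∫₀^{π/2} log (sin x) dx = -(π/2) log 2` together with
`∫₀^{π/2} log (sin x) cos 2x dx = -π/4`, an integration by parts against
`(sin x log (sin x)) cos x`, which is continuous up to `x = 0` because `t log t` is. -/

theorem intervalIntegrable_log_sin_mul {g : ℝ → ℝ} (hg : Continuous g) (a b : ℝ) :
    IntervalIntegrable (fun x => log (sin x) * g x) volume a b :=
  intervalIntegrable_log_sin.mul_continuousOn hg.continuousOn

theorem hasDerivAt_sin_mul_log_sin_mul_cos {x : ℝ} (hx : sin x ≠ 0) :
    HasDerivAt (fun x => sin x * log (sin x) * cos x)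
      (log (sin x) * cos (2 * x) + cos x ^ 2) x := by
  have h := (((hasDerivAt_mul_log hx).comp x (hasDerivAt_sin x)).mul (hasDerivAt_cos x))
  refine h.congr_deriv ?_
  simp only [Function.comp_apply, cos_two_mul]
  linear_combination -log (sin x) * sin_sq_add_cos_sq x

theorem integral_log_sin_mul_cos_two_mul :
    ∫ x in (0:ℝ)..(π / 2), log (sin x) * cos (2 * x) = -(π / 4) := by
  have hcos_sq : IntervalIntegrable (fun x => cos x ^ 2) volume 0 (π / 2) :=
    (continuous_cos.pow 2).intervalIntegrable _ _
  have hlog_cos : IntervalIntegrable (fun x => log (sin x) * cos (2 * x)) volume 0 (π / 2) :=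
    intervalIntegrable_log_sin_mul (by fun_prop) _ _
  have hftc : ∫ x in (0:ℝ)..(π / 2), (log (sin x) * cos (2 * x) + cos x ^ 2) = 0 := by
    rw [integral_eq_sub_of_hasDeriv_right_of_le (by positivity)
      ((continuous_mul_log.comp continuous_sin).mul continuous_cos).continuousOn
      (fun x hx => (hasDerivAt_sin_mul_log_sin_mul_cos
        (sin_pos_of_pos_of_lt_pi hx.1 (by linarith [hx.2, pi_pos])).ne').hasDerivWithinAt)
      (hlog_cos.add hcos_sq)]
    simp
  rw [integral_add hlog_cos hcos_sq, integral_cos_sq] at hftc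
  simp only [cos_pi_div_two, sin_zero, cos_zero] at hftc
  linarith

theorem integral_log_sin_mul_sin_sq :
    ∫ x in (0:ℝ)..(π / 2), log (sin x) * sin x ^ 2 = π / 8 - π / 4 * log 2 := by
  have hsin_sq : ∀ x,
      log (sin x) * sin x ^ 2 = (log (sin x) - log (sin x) * cos (2 * x)) / 2 := by
    intro x
    rw [cos_two_mul, cos_sq']
    ring
  simp_rw [hsin_sq]
  rw [intervalIntegral.integral_div,
    integral_sub (f := fun x => log (sin x)) intervalIntegrable_log_sin
      (intervalIntegrable_log_sin_mul (by fun_prop) _ _),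
    integral_log_sin_zero_pi_div_two, integral_log_sin_mul_cos_two_mul]
  ring

theorem log_const_mul_mul_sq {c : ℝ} (hc : c ≠ 0) (y : ℝ) :
    log (c * y) * y ^ 2 = (log c + log y) * y ^ 2 := by
  rcases eq_or_ne y 0 with rfl | hy
  · simp
  · rw [log_mul hc hy]

/-- The continuous logarithmic energy of `SO(3)`: the expected value of
`log ‖O - O'‖_F⁻¹` for Haar-random `O, O'` equals `-(1 + log 2)/2`; equivalently,
`(2/π) ∫₀^π log(√8 sin(θ/2)) sin²(θ/2) dθ = (1 + log 2)/2`. -/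
theorem continuous_energy_SO3 :
    (2 / π) * ∫ θ in (0:ℝ)..π,
        Real.log (Real.sqrt 8 * Real.sin (θ / 2)) * Real.sin (θ / 2) ^ 2
      = (1 + Real.log 2) / 2 := by
  have hsubst : ∫ θ in (0:ℝ)..π, log (√8 * sin (θ / 2)) * sin (θ / 2) ^ 2
      = 2 * ∫ x in (0:ℝ)..(π / 2), log (√8 * sin x) * sin x ^ 2 := by
    simpa using integral_comp_div (a := 0) (b := π)
      (fun x => log (√8 * sin x) * sin x ^ 2) two_ne_zero
  have hlog_sqrt : log √8 = 3 / 2 * log 2 := by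
    rw [log_sqrt (by norm_num), show (8:ℝ) = 2 ^ 3 by norm_num, log_pow]
    ring
  simp_rw [hsubst, log_const_mul_mul_sq (by positivity : √8 ≠ 0), add_mul]
  rw [intervalIntegral.integral_add
      ((by fun_prop : Continuous fun x => log √8 * sin x ^ 2).intervalIntegrable _ _)
      (intervalIntegrable_log_sin_mul (g := fun x => sin x ^ 2) (by fun_prop) _ _),
    intervalIntegral.integral_const_mul, integral_sin_sq, integral_log_sin_mul_sin_sq, hlog_sqrt]
  simp only [sin_zero, cos_zero, sin_pi_div_two, cos_pi_div_two]
  field_simp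
  ring
end

section
/- Let $p \in \mathbb{S}^2$, let $H \in \mathrm{SO}(3)$, $\phi \in [0,2\pi)$, and for $j = 1,\ldots,s$ set $O_j = H R(2\pi j/s + \phi)$, where $R(\psi)$ is the rotation by angle $\psi$ about the $z$-axis. Then $\sum_{i \neq j} \log \|O_i - O_j\|_F = \frac{s(s-1)}{2}\log 2 + s \log s$. -/
/-!
With `ζ = exp (2πi/s)`, the orthogonal factor `H` drops out and the Frobenius distance is
`‖O_i - O_j‖² = ‖R(θ_i) - R(θ_j)‖² = 2 |e^{iθ_i} - e^{iθ_j}|² = 2 |ζ^i - ζ^j|²`. Each summand is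
therefore `log 2 / 2 + log |ζ^i - ζ^j|`, and for fixed `i` the product `∏_{j ≠ i} (ζ^i - ζ^j)` is
`P'(ζ^i) = s ζ^{i(s-1)}` for `P = X^s - 1 = ∏_j (X - ζ^j)`, of absolute value `s`.
-/

open Real Finset Matrix

/-- The rotation by angle `ψ` about the `z`-axis. -/
noncomputable def rotZ (ψ : ℝ) : Matrix (Fin 3) (Fin 3) ℝ :=
  !![Real.cos ψ, -Real.sin ψ, 0; Real.sin ψ, Real.cos ψ, 0; 0, 0, 1]

open Polynomial Lagrange

namespace IsPrimitiveRoot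

variable {R : Type*} [CommRing R] [IsDomain R] {ζ : R} {n : ℕ}

theorem injOn_pow_Icc (h : IsPrimitiveRoot ζ n) : Set.InjOn (ζ ^ ·) (Icc 1 n) := by
  intro a ha b hb hab
  simp only [coe_Icc, Set.mem_Icc] at ha hb
  have hζ : ζ ≠ 0 := h.ne_zero (by omega)
  have hpred : ζ ^ (a - 1) = ζ ^ (b - 1) := mul_right_cancel₀ hζ <| by
    rwa [← pow_succ, ← pow_succ, Nat.sub_add_cancel ha.1, Nat.sub_add_cancel hb.1]
  have := h.pow_inj (by omega) (by omega) hpred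
  omega

theorem pow_sub_pow_ne_zero (h : IsPrimitiveRoot ζ n) {i j : ℕ} (hi : i ∈ Icc 1 n)
    (hj : j ∈ (Icc 1 n).erase i) : ζ ^ i - ζ ^ j ≠ 0 :=
  sub_ne_zero.mpr fun hij => (mem_erase.mp hj).1 (h.injOn_pow_Icc (mem_erase.mp hj).2 hi hij.symm)

theorem nodal_Icc_pow (h : IsPrimitiveRoot ζ n) (hn : 0 < n) :
    nodal (Icc 1 n) (ζ ^ ·) = X ^ n - 1 := by
  classical
  have himage : (Icc 1 n).image (ζ ^ ·) = nthRootsFinset n (1 : R) := by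
    refine eq_of_subset_of_card_le (fun x hx => ?_) ?_
    · obtain ⟨j, -, rfl⟩ := mem_image.mp hx
      rw [Polynomial.mem_nthRootsFinset hn, ← pow_mul, mul_comm, pow_mul, h.pow_eq_one, one_pow]
    · rw [h.card_nthRootsFinset, card_image_of_injOn h.injOn_pow_Icc, Nat.card_Icc,
        Nat.add_sub_cancel]
  rw [X_pow_sub_one_eq_prod hn h, ← himage, prod_image h.injOn_pow_Icc]
  rfl

theorem prod_erase_Icc_pow_sub_pow (h : IsPrimitiveRoot ζ n) {i : ℕ} (hi : i ∈ Icc 1 n) :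
    ∏ j ∈ (Icc 1 n).erase i, (ζ ^ i - ζ ^ j) = n * (ζ ^ i) ^ (n - 1) := by
  have hn : 0 < n := by grind
  rw [← eval_nodal, ← eval_nodal_derivative_eval_node_eq (v := (ζ ^ ·)) hi, h.nodal_Icc_pow hn]
  simp [derivative_X_pow]

theorem sum_log_norm_erase_Icc_pow_sub_pow {ζ : ℂ} (h : IsPrimitiveRoot ζ n) {i : ℕ}
    (hi : i ∈ Icc 1 n) : ∑ j ∈ (Icc 1 n).erase i, Real.log ‖ζ ^ i - ζ ^ j‖ = Real.log n := by
  have hn : n ≠ 0 := by grind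
  rw [← Real.log_prod fun j hj => norm_ne_zero_iff.mpr (h.pow_sub_pow_ne_zero hi hj),
    ← norm_prod, h.prod_erase_Icc_pow_sub_pow hi, norm_mul, norm_pow, norm_pow, h.norm'_eq_one hn,
    one_pow, one_pow, mul_one, Complex.norm_natCast]

end IsPrimitiveRoot

theorem Matrix.transpose_mul_self_of_transpose_mul_eq_one {m n R : Type*} [Fintype m]
    [DecidableEq m] [CommRing R] {H : Matrix m m R} (hH : Hᵀ * H = 1) (A : Matrix m n R) :
    (H * A)ᵀ * (H * A) = Aᵀ * A := by
  rw [transpose_mul, Matrix.mul_assoc, ← Matrix.mul_assoc Hᵀ, hH, Matrix.one_mul]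

theorem trace_transpose_mul_self_rotZ_sub (a b : ℝ) :
    trace ((rotZ a - rotZ b)ᵀ * (rotZ a - rotZ b))
      = 2 * ‖Complex.exp (a * Complex.I) - Complex.exp (b * Complex.I)‖ ^ 2 := by
  rw [Complex.sq_norm, Complex.normSq_apply]
  simp [rotZ, trace, mul_apply, Fin.sum_univ_succ, Complex.exp_ofReal_mul_I_re,
    Complex.exp_ofReal_mul_I_im]
  ring

theorem Real.log_sqrt_two_mul_sq {x : ℝ} (hx : 0 < x) :
    Real.log (√(2 * x ^ 2)) = Real.log 2 / 2 + Real.log x := by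
  rw [Real.log_sqrt (by positivity), Real.log_mul two_ne_zero (by positivity), Real.log_pow]
  ring

theorem sum_log_dist_equally_spaced_general (s : ℕ)
    (H : Matrix (Fin 3) (Fin 3) ℝ) (hH : H * Hᵀ = 1)
    (φ : ℝ)
    (O : ℕ → Matrix (Fin 3) (Fin 3) ℝ)
    (hO : ∀ j, O j = H * rotZ (2 * π * j / s + φ)) :
    ∑ i ∈ Finset.Icc 1 s, ∑ j ∈ (Finset.Icc 1 s).erase i,
        Real.log (Real.sqrt (Matrix.trace ((O i - O j)ᵀ * (O i - O j))))
      = (s : ℝ) * ((s : ℝ) - 1) / 2 * Real.log 2 + (s : ℝ) * Real.log s := by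
  set ζ : ℂ := Complex.exp (2 * π * Complex.I / s)
  have hphase : ∀ j : ℕ, Complex.exp ((2 * π * j / s + φ : ℝ) * Complex.I)
      = Complex.exp (φ * Complex.I) * ζ ^ j := by
    intro j
    rw [← Complex.exp_nat_mul, ← Complex.exp_add]
    congr 1
    push_cast
    ring
  have hdist : ∀ i j : ℕ, trace ((O i - O j)ᵀ * (O i - O j)) = 2 * ‖ζ ^ i - ζ ^ j‖ ^ 2 := by
    intro i j
    rw [hO, hO, ← Matrix.mul_sub,
      transpose_mul_self_of_transpose_mul_eq_one (mul_eq_one_comm.mp hH),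
      trace_transpose_mul_self_rotZ_sub, hphase, hphase, ← mul_sub, norm_mul,
      Complex.norm_exp_ofReal_mul_I, one_mul]
  have hrow : ∀ i ∈ Icc 1 s, ∑ j ∈ (Icc 1 s).erase i,
      Real.log (√(trace ((O i - O j)ᵀ * (O i - O j))))
        = ((s : ℝ) - 1) * (Real.log 2 / 2) + Real.log s := by
    intro i hi
    have hζ : IsPrimitiveRoot ζ s := Complex.isPrimitiveRoot_exp s (by grind)
    have hs : 1 ≤ s := by grind
    rw [sum_congr rfl fun j hj => by
        rw [hdist, Real.log_sqrt_two_mul_sq (norm_pos_iff.mpr (hζ.pow_sub_pow_ne_zero hi hj))],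
      sum_add_distrib, hζ.sum_log_norm_erase_Icc_pow_sub_pow hi, sum_const, card_erase_of_mem hi,
      Nat.card_Icc, Nat.add_sub_cancel, nsmul_eq_mul, Nat.cast_sub hs, Nat.cast_one]
  rw [sum_congr rfl hrow, sum_const, Nat.card_Icc, Nat.add_sub_cancel, nsmul_eq_mul]
  ring

/-- For `s` equally spaced rotation matrices `O_j = H · R(2πj/s + φ)` with
`H ∈ SO(3)`, the sum of logarithms of mutual Frobenius distances equals
`(s(s-1)/2) log 2 + s log s`. -/
theorem sum_log_dist_equally_spaced (s : ℕ) (hs : 1 ≤ s)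
    (H : Matrix (Fin 3) (Fin 3) ℝ) (hH : H * Hᵀ = 1) (hdet : H.det = 1)
    (φ : ℝ) (hφ : φ ∈ Set.Ico 0 (2 * π))
    (O : ℕ → Matrix (Fin 3) (Fin 3) ℝ)
    (hO : ∀ j, O j = H * rotZ (2 * π * j / s + φ)) :
    ∑ i ∈ Finset.Icc 1 s, ∑ j ∈ (Finset.Icc 1 s).erase i,
        Real.log (Real.sqrt (Matrix.trace ((O i - O j)ᵀ * (O i - O j))))
      = (s : ℝ) * ((s : ℝ) - 1) / 2 * Real.log 2 + (s : ℝ) * Real.log s :=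
  sum_log_dist_equally_spaced_general s H hH φ O hO
end

section
/- Let $H \in \mathrm{SO}(3)$ and let $\alpha, \beta \in \mathbb{R}$ with $|\beta| \leq \alpha/3$. Then $\frac{1}{2\pi}\int_0^{2\pi} \log\left(\alpha + \beta\,\mathrm{trace}(H R(\phi))\right) d\phi = 2 \log \frac{\sqrt{\alpha - \beta} + \sqrt{\alpha + \beta + 2\beta\, e_3^T H e_3}}{2}$. -/
open Real Matrix MeasureTheory intervalIntegral

open Metric Set

lemma cauchy_log (r : ℝ) (h0 : 0 ≤ r) (h1 : r < 1) :
    ∫ θ in (0:ℝ)..(2*π), Real.log (1 + r^2 - 2*r*Real.cos θ) = 0 := by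
  set f : ℂ → ℂ := fun z => Complex.log (1 - r*z) with hf
  have hmem : ∀ z : ℂ, ‖z‖ ≤ 1 → (1 - r*z) ∈ Complex.slitPlane := by
    intro z hz
    left
    have h2 : (1 - (r:ℂ)*z).re = 1 - r * z.re := by simp
    rw [h2]
    have h3 : |z.re| ≤ 1 := le_trans (Complex.abs_re_le_norm z) hz
    have h4 : r * z.re ≤ r * 1 :=
      mul_le_mul_of_nonneg_left (le_trans (le_abs_self _) h3) h0
    linarith
  have hdiff : DifferentiableOn ℂ f (closure (ball (0:ℂ) 1)) := by
    rw [closure_ball (0:ℂ) one_ne_zero]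
    intro z hz
    apply DifferentiableAt.differentiableWithinAt
    have hz' : ‖z‖ ≤ 1 := by simpa [Complex.dist_eq] using hz
    exact (Complex.differentiableAt_log (hmem z hz')).comp (f := fun z : ℂ => 1 - (r:ℂ)*z) z (by fun_prop)
  have hdc : DiffContOnCl ℂ f (ball (0:ℂ) 1) := hdiff.diffContOnCl
  have key := hdc.circleIntegral_sub_inv_smul (w := 0) (by simp)
  have hf0 : f 0 = 0 := by simp [hf]
  rw [hf0, smul_zero] at key
  -- reduce circle integral to interval integral
  rw [circleIntegral] at key
  simp only [deriv_circleMap, sub_zero, smul_eq_mul] at key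
  have hne : ∀ θ : ℝ, circleMap 0 1 θ ≠ 0 := fun θ => circleMap_ne_center one_ne_zero
  have h2 : ∀ θ : ℝ, circleMap 0 1 θ * Complex.I * ((circleMap 0 1 θ)⁻¹ * f (circleMap 0 1 θ))
      = Complex.I * f (circleMap 0 1 θ) := by
    intro θ; field_simp [hne θ]
  simp only [h2] at key
  rw [intervalIntegral.integral_const_mul] at key
  have key2 : (∫ θ in (0:ℝ)..(2*π), f (circleMap 0 1 θ)) = 0 := by
    simpa [Complex.I_ne_zero] using key
  -- continuity and integrability
  have hcont : Continuous fun θ : ℝ => f (circleMap 0 1 θ) := by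
    rw [continuous_iff_continuousAt]
    intro θ
    have hc2 : ContinuousAt (fun θ : ℝ => (1 : ℂ) - r * circleMap 0 1 θ) θ := by fun_prop
    exact hc2.clog (hmem _ (by simp))
  have hint : IntervalIntegrable (fun θ : ℝ => f (circleMap 0 1 θ)) volume 0 (2*π) :=
    hcont.intervalIntegrable _ _
  have key3 : (∫ θ in (0:ℝ)..(2*π), (f (circleMap 0 1 θ)).re) = 0 := by
    have := Complex.reCLM.intervalIntegral_comp_comm hint
    simp only [Complex.reCLM_apply] at this
    rw [this, key2]
    simp
  have hptw : ∀ θ : ℝ, Real.log (1 + r^2 - 2*r*Real.cos θ) = 2 * (f (circleMap 0 1 θ)).re := by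
    intro θ
    rw [hf]
    simp only
    rw [Complex.log_re]
    have h2' : Real.log (‖1 - r * circleMap 0 1 θ‖ ^ 2)
        = 2 * Real.log (‖1 - r * circleMap 0 1 θ‖) := by
      rw [Real.log_pow]; norm_num
    rw [← h2']
    congr 1
    rw [Complex.sq_norm]
    simp [Complex.normSq_apply, circleMap, Complex.exp_ofReal_mul_I_re,
      Complex.exp_ofReal_mul_I_im]
    nlinarith [Real.sin_sq_add_cos_sq θ]
  simp only [hptw]
  rw [intervalIntegral.integral_const_mul, key3, mul_zero]

lemma intInt_log_sub : IntervalIntegrable (fun θ => Real.log (2 - 2*Real.cos θ)) volume 0 π := by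
  have hπ : 0 < π := Real.pi_pos
  -- dominating function
  have hg : IntervalIntegrable (fun θ : ℝ => Real.log 4 + 2*Real.log 2 + 4*θ^(-(1/2):ℝ))
      volume 0 π := by
    apply IntervalIntegrable.add
    · exact intervalIntegrable_const
    · exact (intervalIntegrable_rpow' (by norm_num)).const_mul 4
  apply hg.mono_fun'
  · apply Measurable.aestronglyMeasurable
    apply Real.measurable_log.comp
    fun_prop
  · rw [Filter.EventuallyLE, ae_restrict_iff' measurableSet_uIoc]
    apply Filter.Eventually.of_forall
    intro θ hθ
    rw [Set.uIoc_of_le hπ.le] at hθ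
    obtain ⟨h0, h1⟩ := hθ
    have hcos : Real.cos θ ≤ 1 - 2/π^2 * θ^2 :=
      Real.cos_le_one_sub_mul_cos_sq (by rw [abs_of_pos h0]; exact h1)
    have hπ4 : π ≤ 4 := Real.pi_le_four
    have h8 : (1/8:ℝ) ≤ 2/π^2 := by
      rw [div_le_div_iff₀ (by norm_num) (by positivity)]
      nlinarith
    have hlow : θ^2/4 ≤ 2 - 2*Real.cos θ := by
      nlinarith [mul_le_mul_of_nonneg_right h8 (sq_nonneg θ)]
    have hposq : 0 < θ^2/4 := by positivity
    have hub : Real.log (2 - 2*Real.cos θ) ≤ Real.log 4 := by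
      apply Real.log_le_log (by linarith)
      nlinarith [Real.neg_one_le_cos θ]
    have hlb : 2*Real.log θ - 2*Real.log 2 ≤ Real.log (2 - 2*Real.cos θ) := by
      have := Real.log_le_log hposq hlow
      have hq : Real.log (θ^2/4) = 2*Real.log θ - 2*Real.log 2 := by
        rw [Real.log_div (by positivity) (by norm_num), Real.log_pow]
        norm_num
        rw [show (4:ℝ) = 2^2 by norm_num, Real.log_pow]
        push_cast; ring
      linarith [hq ▸ this]
    -- -2 log θ ≤ 4 θ^(-1/2)
    have hrp : -(2*Real.log θ) ≤ 4*θ^(-(1/2):ℝ) := by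
      rcases le_or_gt θ 1 with h|h
      · have : Real.log (θ^(-(1/2):ℝ)) = (-(1/2):ℝ) * Real.log θ := Real.log_rpow h0 _
        have h2 : Real.log (θ^(-(1/2):ℝ)) ≤ θ^(-(1/2):ℝ) :=
          le_trans (Real.log_le_sub_one_of_pos (Real.rpow_pos_of_pos h0 _)) (by linarith)
        nlinarith [Real.rpow_nonneg h0.le (-(1/2):ℝ)]
      · have h2 : 0 ≤ Real.log θ := Real.log_nonneg h.le
        have h3 : 0 ≤ θ^(-(1/2):ℝ) := Real.rpow_nonneg h0.le _
        linarith
    simp only [Real.norm_eq_abs]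
    rw [abs_le]
    constructor
    · have h4 : (0:ℝ) ≤ Real.log 4 := Real.log_nonneg (by norm_num)
      have h2 : (0:ℝ) ≤ Real.log 2 := Real.log_nonneg (by norm_num)
      linarith
    · have h2 : (0:ℝ) ≤ 2*Real.log 2 := by positivity
      have h3 : 0 ≤ 4*θ^(-(1/2):ℝ) := by positivity
      linarith

lemma J_sub : IntervalIntegrable (fun θ => Real.log (2 - 2*Real.cos θ)) volume 0 (2*π) := by
  apply intInt_log_sub.trans
  have h := (intInt_log_sub.comp_sub_left (2*π)).symm
  have he : (fun x => Real.log (2 - 2*Real.cos (2*π - x)))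
      = fun x => Real.log (2 - 2*Real.cos x) := by
    funext x
    rw [Real.cos_sub]
    simp [Real.cos_two_pi, Real.sin_two_pi]
  rw [show (2*π - π) = π by ring, show (2*π - (0:ℝ)) = 2*π by ring, he] at h
  exact h

lemma J_add_half : IntervalIntegrable (fun θ => Real.log (2 + 2*Real.cos θ)) volume 0 π := by
  have h := J_sub.comp_add_right π
  have he : (fun x => Real.log (2 - 2*Real.cos (x + π)))
      = fun x => Real.log (2 + 2*Real.cos x) := by
    funext x; rw [Real.cos_add_pi]; ring_nf
  rw [he] at h
  apply h.mono_set
  rw [Set.uIcc_of_le Real.pi_pos.le, Set.uIcc_of_le (by linarith [Real.pi_pos] : (0:ℝ)-π ≤ 2*π-π)]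
  apply Set.Icc_subset_Icc <;> linarith [Real.pi_pos]

lemma J_add : IntervalIntegrable (fun θ => Real.log (2 + 2*Real.cos θ)) volume 0 (2*π) := by
  apply J_add_half.trans
  have h := (J_add_half.comp_sub_left (2*π)).symm
  have he : (fun x => Real.log (2 + 2*Real.cos (2*π - x)))
      = fun x => Real.log (2 + 2*Real.cos x) := by
    funext x
    rw [Real.cos_sub]
    simp [Real.cos_two_pi, Real.sin_two_pi]
  rw [show (2*π - π) = π by ring, show (2*π - (0:ℝ)) = 2*π by ring, he] at h
  exact h

lemma dup_integral : ∫ θ in (0:ℝ)..(2*π), Real.log (2 - 2*Real.cos θ) = 0 := by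
  set f : ℝ → ℝ := fun θ => Real.log (2 - 2*Real.cos θ) with hf
  set A : ℝ := ∫ u in (0:ℝ)..π, f u with hA
  have he2 : (fun x => f (2*π - x)) = f := by
    funext x; rw [hf]; simp only
    rw [Real.cos_sub]; simp [Real.cos_two_pi, Real.sin_two_pi]
  have hmirror : ∫ θ in π..(2*π), f θ = A := by
    have h := intervalIntegral.integral_comp_sub_left (a := (0:ℝ)) (b := π) f (2*π)
    rw [he2, show (2*π - π) = π by ring, show (2*π - (0:ℝ)) = 2*π by ring] at h
    rw [← h]
  have hJsub2 : IntervalIntegrable f volume π (2*π) := by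
    apply J_sub.mono_set
    rw [Set.uIcc_of_le (by linarith [Real.pi_pos] : π ≤ 2*π),
      Set.uIcc_of_le (by linarith [Real.pi_pos] : (0:ℝ) ≤ 2*π)]
    apply Set.Icc_subset_Icc <;> linarith [Real.pi_pos]
  have hsplit : ∫ θ in (0:ℝ)..(2*π), f θ = A + A := by
    rw [← intervalIntegral.integral_add_adjacent_intervals
      (a := (0:ℝ)) (b := π) (c := 2*π) intInt_log_sub hJsub2, hmirror]
  -- A' = A
  have hflip : ∫ u in (0:ℝ)..π, Real.log (2 + 2*Real.cos u) = A := by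
    have h := intervalIntegral.integral_comp_sub_left (a := (0:ℝ)) (b := π) f π
    have he : (fun x => f (π - x)) = fun x => Real.log (2 + 2*Real.cos x) := by
      funext x; rw [hf]; simp only
      rw [Real.cos_pi_sub]; ring_nf
    rw [he] at h
    rw [h]; norm_num [hA]
  -- duplication
  have hdup : ∫ u in (0:ℝ)..π, f (2*u) = 2⁻¹ * ∫ θ in (0:ℝ)..(2*π), f θ := by
    have h := intervalIntegral.integral_comp_mul_left (a := (0:ℝ)) (b := π) f
      (c := 2) (by norm_num)
    rw [h]; norm_num
  have hae : ∀ᵐ u : ℝ ∂volume, u ∈ Set.uIoc (0:ℝ) π →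
      f (2*u) = f u + Real.log (2 + 2*Real.cos u) := by
    have hne : ∀ᵐ u : ℝ ∂volume, u ≠ π := by
      rw [MeasureTheory.ae_iff]
      have hs : {a : ℝ | ¬ a ≠ π} = {π} := by ext x; simp
      rw [hs, Real.volume_singleton]
    filter_upwards [hne] with u hu huIoc
    rw [Set.uIoc_of_le Real.pi_pos.le] at huIoc
    have h0 : 0 < u := huIoc.1
    have h1 : u < π := lt_of_le_of_ne huIoc.2 hu
    have hc2 : f (2*u) = Real.log ((2 - 2*Real.cos u) * (2 + 2*Real.cos u)) := by
      rw [hf]; simp only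
      congr 1
      rw [Real.cos_two_mul]; ring
    have hclt : Real.cos u < 1 := by
      have := Real.cos_lt_cos_of_nonneg_of_le_pi le_rfl h1.le h0
      simpa using this
    have hcgt : -1 < Real.cos u := by
      have := Real.cos_lt_cos_of_nonneg_of_le_pi h0.le le_rfl h1
      simpa using this
    rw [hc2, Real.log_mul (by nlinarith) (by nlinarith)]
  have hsum : ∫ u in (0:ℝ)..π, f (2*u)
      = A + ∫ u in (0:ℝ)..π, Real.log (2 + 2*Real.cos u) := by
    rw [intervalIntegral.integral_congr_ae hae]
    exact intervalIntegral.integral_add intInt_log_sub J_add_half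
  rw [hflip] at hsum
  rw [hdup, hsplit] at hsum
  linarith [hsplit, hsum]

lemma int_zero_sub (r : ℝ) (h0 : 0 ≤ r) (h1 : r ≤ 1) :
    ∫ θ in (0:ℝ)..(2*π), Real.log (1 + r^2 - 2*r*Real.cos θ) = 0 := by
  rcases lt_or_eq_of_le h1 with h|h
  · exact cauchy_log r h0 h
  · subst h
    have he : (fun θ => Real.log (1 + (1:ℝ)^2 - 2*1*Real.cos θ))
        = fun θ => Real.log (2 - 2*Real.cos θ) := by
      funext θ; norm_num
    rw [show ∫ θ in (0:ℝ)..(2*π), Real.log (1 + (1:ℝ)^2 - 2*1*Real.cos θ)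
      = ∫ θ in (0:ℝ)..(2*π), Real.log (2 - 2*Real.cos θ) from by rw [he], dup_integral]

lemma int_zero_add (r : ℝ) (h0 : 0 ≤ r) (h1 : r ≤ 1) :
    ∫ θ in (0:ℝ)..(2*π), Real.log (1 + r^2 + 2*r*Real.cos θ) = 0 := by
  have hper : Function.Periodic (fun θ => Real.log (1 + r^2 - 2*r*Real.cos θ)) (2*π) := by
    intro x; simp [Real.cos_add_two_pi]
  have h1' : ∫ θ in (0:ℝ)..(2*π), Real.log (1 + r^2 - 2*r*Real.cos (θ + π)) 
      = ∫ θ in π..(π + 2*π), Real.log (1 + r^2 - 2*r*Real.cos θ) := by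
    rw [intervalIntegral.integral_comp_add_right (a := (0:ℝ)) (b := 2*π)
      (fun θ => Real.log (1 + r^2 - 2*r*Real.cos θ)) π]
    norm_num
    ring_nf
  have h2' := hper.intervalIntegral_add_eq π 0
  rw [h2', zero_add] at h1'
  have he : (fun θ => Real.log (1 + r^2 - 2*r*Real.cos (θ + π)))
      = fun θ => Real.log (1 + r^2 + 2*r*Real.cos θ) := by
    funext θ; rw [Real.cos_add_pi]; ring_nf
  rw [he] at h1'
  rw [h1', int_zero_sub r h0 h1]

lemma intInt_add (r : ℝ) (h0 : 0 ≤ r) (h1 : r ≤ 1) :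
    IntervalIntegrable (fun θ => Real.log (1 + r^2 + 2*r*Real.cos θ)) volume 0 (2*π) := by
  rcases lt_or_eq_of_le h1 with h|h
  · apply Continuous.intervalIntegrable
    apply Continuous.log (by fun_prop)
    intro x
    nlinarith [Real.neg_one_le_cos x, sq_nonneg (1 - r)]
  · subst h
    have he : (fun θ => Real.log (1 + (1:ℝ)^2 + 2*1*Real.cos θ))
        = fun θ => Real.log (2 + 2*Real.cos θ) := by
      funext θ; norm_num
    rw [he]; exact J_add

lemma int_cos_amp (c ρ : ℝ) (h0 : 0 ≤ ρ) (h1 : ρ ≤ c) :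
    ∫ θ in (0:ℝ)..(2*π), Real.log (c + ρ*Real.cos θ)
      = 2*π*Real.log ((c + Real.sqrt (c^2 - ρ^2))/2) := by
  rcases eq_or_lt_of_le (h0.trans h1) with hc|hc
  · -- c = 0, hence ρ = 0
    have hρ : ρ = 0 := le_antisymm (h1.trans hc.symm.le) h0
    subst hρ
    rw [← hc]
    norm_num
  · -- c > 0
    set s : ℝ := Real.sqrt (c^2 - ρ^2) with hs
    have hs0 : 0 ≤ s := Real.sqrt_nonneg _
    have hssq : s^2 = c^2 - ρ^2 := Real.sq_sqrt (by nlinarith)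
    have hsc : s ≤ c := by nlinarith
    set k : ℝ := (c + s)/2 with hk
    have hk0 : 0 < k := by positivity
    set r : ℝ := ρ/(c + s) with hr
    have hr0 : 0 ≤ r := by positivity
    have hr1 : r ≤ 1 := by
      rw [hr, div_le_one (by positivity)]
      linarith
    have hkey : ∀ θ : ℝ, c + ρ*Real.cos θ = k * (1 + r^2 + 2*r*Real.cos θ) := by
      intro θ
      have hcs : c + s ≠ 0 := by positivity
      rw [hk, hr]
      field_simp
      nlinarith [hssq]
    have hae : ∀ᵐ θ : ℝ ∂volume, θ ∈ Set.uIoc (0:ℝ) (2*π) →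
        Real.log (c + ρ*Real.cos θ)
          = Real.log k + Real.log (1 + r^2 + 2*r*Real.cos θ) := by
      have hne : ∀ᵐ θ : ℝ ∂volume, θ ≠ π := by
        rw [MeasureTheory.ae_iff]
        have hsel : {a : ℝ | ¬ a ≠ π} = {π} := by ext x; simp
        rw [hsel, Real.volume_singleton]
      filter_upwards [hne] with θ hθ hIoc
      rw [hkey θ, Real.log_mul hk0.ne']
      rw [Set.uIoc_of_le (by positivity) ] at hIoc
      have hcos : -1 < Real.cos θ ∨ r < 1 := by
        rcases lt_or_eq_of_le hr1 with h|h
        · right; exact h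
        · left
          rcases lt_trichotomy θ π with h'|h'|h'
          · have := Real.cos_lt_cos_of_nonneg_of_le_pi hIoc.1.le le_rfl h'
            simpa using this
          · exact absurd h' hθ
          · have h2 : 2*π - θ < π := by linarith
            have h3 : 0 ≤ 2*π - θ := by linarith [hIoc.2]
            have := Real.cos_lt_cos_of_nonneg_of_le_pi h3 le_rfl h2
            rw [Real.cos_sub] at this
            simp [Real.cos_two_pi, Real.sin_two_pi] at this
            linarith
      have hpos : 0 < 1 + r^2 + 2*r*Real.cos θ := by
        rcases eq_or_lt_of_le hr0 with h'|h'
        · rw [← h']; norm_num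
        · rcases hcos with h|h
          · nlinarith [mul_pos (by linarith : (0:ℝ) < 2*r)
              (by linarith : (0:ℝ) < 1 + Real.cos θ), sq_nonneg (1 - r)]
          · nlinarith [Real.neg_one_le_cos θ, sq_nonneg (1 - r),
              mul_nonneg (by linarith : (0:ℝ) ≤ 2*r)
                (by nlinarith [Real.neg_one_le_cos θ] : (0:ℝ) ≤ 1 + Real.cos θ)]
      exact hpos.ne'
    rw [intervalIntegral.integral_congr_ae hae]
    rw [intervalIntegral.integral_add intervalIntegrable_const (intInt_add r hr0 hr1)]
    rw [int_zero_add r hr0 hr1, add_zero]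
    simp [mul_comm]

lemma int_phase (c A B : ℝ) (h : Real.sqrt (A^2+B^2) ≤ c) :
    ∫ θ in (0:ℝ)..(2*π), Real.log (c + A*Real.cos θ + B*Real.sin θ)
      = 2*π*Real.log ((c + Real.sqrt (c^2 - A^2 - B^2))/2) := by
  set ρ : ℝ := Real.sqrt (A^2+B^2) with hρ
  have hρ0 : 0 ≤ ρ := Real.sqrt_nonneg _
  have hρsq : ρ^2 = A^2 + B^2 := Real.sq_sqrt (by positivity)
  rcases eq_or_lt_of_le hρ0 with h0|h0
  · have hA : A = 0 := by nlinarith [sq_nonneg A, sq_nonneg B]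
    have hB : B = 0 := by nlinarith [sq_nonneg A, sq_nonneg B]
    subst hA; subst hB
    have := int_cos_amp c 0 le_rfl (hρ0.trans h)
    simp only [zero_mul, add_zero, mul_zero] at this ⊢
    rw [show c^2 - 0^2 - 0^2 = c^2 - 0^2 by ring]
    exact this
  · set z : ℂ := ⟨A, B⟩ with hz
    have habs : ‖z‖ = ρ := by
      rw [Complex.norm_def, Complex.normSq_mk, hρ]
      ring_nf
    have hzne : z ≠ 0 := by
      intro hh
      rw [hh] at habs
      simp at habs
      exact absurd habs.symm h0.ne'
    set ψ : ℝ := Complex.arg z with hψ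
    have hcosψ : Real.cos ψ = A/ρ := by
      rw [hψ, Complex.cos_arg hzne, habs, hz]
    have hsinψ : Real.sin ψ = B/ρ := by
      rw [hψ, Complex.sin_arg, habs, hz]
    have hkey : ∀ θ : ℝ, c + A*Real.cos θ + B*Real.sin θ = c + ρ*Real.cos (θ - ψ) := by
      intro θ
      rw [Real.cos_sub, hcosψ, hsinψ]
      field_simp
      ring
    simp only [hkey]
    have hshift := intervalIntegral.integral_comp_sub_right (a := (0:ℝ)) (b := 2*π)
      (fun θ => Real.log (c + ρ*Real.cos θ)) ψ
    rw [hshift]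
    have hper : Function.Periodic (fun θ => Real.log (c + ρ*Real.cos θ)) (2*π) := by
      intro x; simp [Real.cos_add_two_pi]
    have h2 := hper.intervalIntegral_add_eq (0 - ψ) 0
    rw [show (0:ℝ) - ψ + 2*π = 2*π - ψ by ring, zero_add] at h2
    rw [h2, int_cos_amp c ρ hρ0 (h.trans_eq rfl)]
    rw [hρsq]
    ring_nf

/-- For `H ∈ SO(3)` and `|β| ≤ α/3`,
`(1/2π) ∫₀^{2π} log(α + β trace(H R(φ))) dφ
  = 2 log((√(α-β) + √(α+β+2β h₃₃))/2)`. -/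
theorem integral_log_trace_rot (H : Matrix (Fin 3) (Fin 3) ℝ)
    (hH : H * Hᵀ = 1) (hdet : H.det = 1) (α β : ℝ) (hβ : |β| ≤ α / 3) :
    (1 / (2 * π)) * ∫ φ in (0:ℝ)..(2 * π),
        Real.log (α + β * Matrix.trace (H * rotZ φ))
      = 2 * Real.log ((Real.sqrt (α - β) + Real.sqrt (α + β + 2 * β * H 2 2)) / 2) := by
  have hπ := Real.pi_pos
  have hHT : Hᵀ * H = 1 := mul_eq_one_comm.mp hH
  have hr0 : H 0 0 * H 0 0 + H 0 1 * H 0 1 + H 0 2 * H 0 2 = 1 := by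
    have := congrFun (congrFun hH 0) 0
    simpa [Matrix.mul_apply, Fin.sum_univ_three, Matrix.one_apply] using this
  have hr1 : H 1 0 * H 1 0 + H 1 1 * H 1 1 + H 1 2 * H 1 2 = 1 := by
    have := congrFun (congrFun hH 1) 1
    simpa [Matrix.mul_apply, Fin.sum_univ_three, Matrix.one_apply] using this
  have hc2 : H 0 2 * H 0 2 + H 1 2 * H 1 2 + H 2 2 * H 2 2 = 1 := by
    have := congrFun (congrFun hHT 2) 2
    simpa [Matrix.mul_apply, Fin.sum_univ_three, Matrix.one_apply] using this
  have hadj : Hᵀ = H.adjugate := by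
    have h1 : H * H.adjugate = 1 := by rw [Matrix.mul_adjugate, hdet, one_smul]
    calc Hᵀ = Hᵀ * (H * H.adjugate) := by rw [h1, Matrix.mul_one]
      _ = (Hᵀ * H) * H.adjugate := by rw [Matrix.mul_assoc]
      _ = H.adjugate := by rw [hHT, Matrix.one_mul]
  have h22 : H 2 2 = H 0 0 * H 1 1 - H 0 1 * H 1 0 := by
    have := congrFun (congrFun hadj 2) 2
    rw [Matrix.adjugate_fin_three] at this
    simpa using this
  have hident : (H 0 1 - H 1 0)^2 + (H 0 0 + H 1 1)^2 = (1 + H 2 2)^2 := by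
    linear_combination hr0 + hr1 - hc2 - 2*h22
  have h22le : H 2 2 * H 2 2 ≤ 1 := by nlinarith [hc2, sq_nonneg (H 0 2), sq_nonneg (H 1 2)]
  have h22ge : -1 ≤ H 2 2 := by nlinarith
  have h22le1 : H 2 2 ≤ 1 := by nlinarith
  -- trace computation
  have htr : ∀ φ : ℝ, Matrix.trace (H * rotZ φ)
      = (H 0 0 + H 1 1)*Real.cos φ + (H 0 1 - H 1 0)*Real.sin φ + H 2 2 := by
    intro φ
    simp [rotZ, Matrix.trace_fin_three, Matrix.mul_apply, Fin.sum_univ_three]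
    ring
  set c : ℝ := α + β * H 2 2 with hc
  set A : ℝ := β * (H 0 0 + H 1 1) with hA
  set B : ℝ := β * (H 0 1 - H 1 0) with hB
  clear_value c A B
  have hint : (∫ φ in (0:ℝ)..(2 * π), Real.log (α + β * Matrix.trace (H * rotZ φ)))
      = ∫ φ in (0:ℝ)..(2 * π), Real.log (c + A*Real.cos φ + B*Real.sin φ) := by
    apply intervalIntegral.integral_congr
    intro φ _
    simp only
    rw [htr φ]
    congr 1
    rw [hc, hA, hB]
    ring
  have habs : |β| ≤ α/3 := hβ
  have hb1 : β ≤ |β| := le_abs_self β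
  have hb2 : -β ≤ |β| := neg_le_abs β
  have hABsq : A^2 + B^2 = (|β| * (1 + H 2 2))^2 := by
    rw [hA, hB, show (|β| * (1 + H 2 2))^2 = β^2*(1+H 2 2)^2 by rw [mul_pow, sq_abs]]
    linear_combination β^2 * hident
  have hsqrtAB : Real.sqrt (A^2+B^2) = |β| * (1 + H 2 2) := by
    rw [hABsq]
    exact Real.sqrt_sq (mul_nonneg (abs_nonneg β) (by linarith))
  have habsmul : |β * H 2 2| ≤ |β| := by
    rw [abs_mul]
    exact mul_le_of_le_one_right (abs_nonneg β) (abs_le.mpr ⟨h22ge, h22le1⟩)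
  have h8 := abs_le.mp habsmul
  have hhyp : Real.sqrt (A^2+B^2) ≤ c := by
    rw [hsqrtAB, hc]
    have h6 := mul_le_mul_of_nonneg_left h22le1 (show (0:ℝ) ≤ |β|-β by linarith [abs_nonneg β, hb1])
    have hb0 := abs_nonneg β
    nlinarith [h6]
  rw [hint, int_phase c A B hhyp]
  -- RHS identification
  set u : ℝ := α + β + 2*β*H 2 2 with hu
  clear_value u
  have hαβ : 0 ≤ α - β := by linarith [hb1, habs]
  have hu0 : 0 ≤ u := by
    rw [hu]
    linarith [h8.1, habs, abs_nonneg β]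
  have hcsq : c^2 - A^2 - B^2 = (α - β) * u := by
    rw [hc, hA, hB, hu]
    linear_combination (-β^2) * hident
  have hsplit : Real.sqrt (c^2 - A^2 - B^2) = Real.sqrt (α-β) * Real.sqrt u := by
    rw [hcsq, Real.sqrt_mul hαβ]
  rw [hsplit]
  set x : ℝ := (Real.sqrt (α-β) + Real.sqrt u)/2 with hx
  clear_value x
  have hx0 : 0 ≤ x := by rw [hx]; positivity
  have hxx : x^2 = (c + Real.sqrt (α-β) * Real.sqrt u)/2 := by
    have h1 : Real.sqrt (α-β)^2 = α - β := Real.sq_sqrt hαβ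
    have h2 : Real.sqrt u^2 = u := Real.sq_sqrt hu0
    rw [hx, div_pow, add_sq, h1, h2, hu, hc]
    ring
  have hlog : Real.log ((c + Real.sqrt (α-β) * Real.sqrt u)/2) = 2 * Real.log x := by
    rw [← hxx, Real.log_pow]
    norm_cast
  rw [hlog]
  field_simp
end

section
/- Let $H \in \mathrm{SO}(3)$. Then $\frac{1}{2\pi}\int_0^{2\pi} \log\left(6 - 2\,\mathrm{trace}(H R(\phi))\right) d\phi = 2\log\left(\sqrt{2} + \sqrt{1 - e_3^T H e_3}\right)$. -/
/-!
Write `t = H₂₂`. For any `H`, `trace (H R(φ)) = A cos φ + B sin φ + t` with `A = H₀₀ + H₁₁`,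
`B = H₀₁ - H₁₀`; for a rotation the `(2,2)` cofactor equals `t`, which together with the unit
rows and columns gives `A² + B² = (1 + t)²`. With `p = √2 + √(1 - t)` and `q = √2 - √(1 - t)`
one has `p² + q² = 6 - 2t` and `pq = 1 + t`, so `6 - 2 trace (H R(φ)) = ‖p e^{iφ} - w‖²` for some
`w` with `‖w‖ = |q| ≤ p`. The mean of `log ‖z - w‖` over the circle `|z| = p` is `log p` (Jensen's
formula, valid also for `w` on the circle), which gives `2 log p`.
-/

open Real Matrix intervalIntegral

theorem integral_log_norm_circleMap_sub {c w : ℂ} {R : ℝ} (hw : w ∈ Metric.closedBall c |R|) :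
    ∫ θ in (0:ℝ)..2 * π, log ‖circleMap c R θ - w‖ = 2 * π * log R := by
  have h := circleAverage_log_norm_sub_const_of_mem_closedBall hw
  rw [circleAverage_def, smul_eq_mul] at h
  field_simp at h
  linarith

theorem integral_log_sq_add_sq_sub_mul_cos_sub_mul_sin {p q b c : ℝ} (hp : 0 < p)
    (hqp : |q| ≤ p) (hbc : b ^ 2 + c ^ 2 = (2 * p * q) ^ 2) :
    ∫ θ in (0:ℝ)..2 * π, log (p ^ 2 + q ^ 2 - b * cos θ - c * sin θ) = 4 * π * log p := by
  set w : ℂ := ⟨b / (2 * p), c / (2 * p)⟩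
  have hw : ‖w‖ = |q| := by
    rw [← sq_eq_sq₀ (norm_nonneg _) (abs_nonneg _), sq_abs, Complex.sq_norm,
      Complex.normSq_mk]
    field_simp
    linear_combination hbc
  have hnorm (θ : ℝ) : p ^ 2 + q ^ 2 - b * cos θ - c * sin θ = ‖circleMap 0 p θ - w‖ ^ 2 := by
    rw [Complex.sq_norm, Complex.normSq_apply]
    simp only [circleMap, w, zero_add, Complex.sub_re, Complex.sub_im, Complex.mul_re,
      Complex.mul_im, Complex.ofReal_re, Complex.ofReal_im, Complex.exp_ofReal_mul_I_re,
      Complex.exp_ofReal_mul_I_im, zero_mul, sub_zero, add_zero]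
    field_simp
    linear_combination -hbc - 4 * p ^ 4 * sin_sq_add_cos_sq θ
  have hw_mem : w ∈ Metric.closedBall 0 |p| := by
    rwa [mem_closedBall_zero_iff, hw, abs_of_pos hp]
  calc ∫ θ in (0:ℝ)..2 * π, log (p ^ 2 + q ^ 2 - b * cos θ - c * sin θ)
      = ∫ θ in (0:ℝ)..2 * π, 2 * log ‖circleMap 0 p θ - w‖ := by
        refine integral_congr fun θ _ => ?_
        simp only [hnorm, Real.log_pow, Nat.cast_ofNat]
    _ = 4 * π * log p := by
        rw [integral_const_mul, integral_log_norm_circleMap_sub hw_mem]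
        ring

theorem trace_mul_rotZ (H : Matrix (Fin 3) (Fin 3) ℝ) (φ : ℝ) :
    trace (H * rotZ φ) = (H 0 0 + H 1 1) * cos φ + (H 0 1 - H 1 0) * sin φ + H 2 2 := by
  simp only [rotZ, trace_fin_three, mul_apply, Fin.sum_univ_three, of_apply, cons_val',
    cons_val_zero, cons_val_one, cons_val, cons_val_fin_one, mul_zero, mul_one, mul_neg, add_zero,
    zero_add]
  ring

theorem Matrix.adjugate_eq_transpose_of_mul_transpose_eq_one {n R : Type*} [Fintype n]
    [DecidableEq n] [CommRing R] {H : Matrix n n R} (hH : H * Hᵀ = 1) (hdet : H.det = 1) :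
    H.adjugate = Hᵀ := by
  rw [← inv_eq_right_inv hH, inv_def, hdet, Ring.inverse_one, one_smul]

theorem sq_add_add_sq_sub_eq_one_add_sq {H : Matrix (Fin 3) (Fin 3) ℝ} (hH : H * Hᵀ = 1)
    (hdet : H.det = 1) :
    (H 0 0 + H 1 1) ^ 2 + (H 0 1 - H 1 0) ^ 2 = (1 + H 2 2) ^ 2 := by
  have hrow (i : Fin 3) : H i 0 ^ 2 + H i 1 ^ 2 + H i 2 ^ 2 = 1 := by
    simpa [mul_apply, Fin.sum_univ_three, sq] using congrFun (congrFun hH i) i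
  have hcol : H 0 2 ^ 2 + H 1 2 ^ 2 + H 2 2 ^ 2 = 1 := by
    have hH' : Hᵀ * H = 1 := mul_eq_one_comm.mp hH
    simpa [mul_apply, Fin.sum_univ_three, sq] using congrFun (congrFun hH' 2) 2
  have hcofactor : H 0 0 * H 1 1 - H 0 1 * H 1 0 = H 2 2 := by
    simpa [adjugate_fin_three] using
      congrFun (congrFun (adjugate_eq_transpose_of_mul_transpose_eq_one hH hdet) 2) 2
  linear_combination hrow 0 + hrow 1 - hcol + 2 * hcofactor

/-- For `H ∈ SO(3)`,
`(1/2π) ∫₀^{2π} log(6 - 2 trace(H R(φ))) dφ = 2 log(√2 + √(1 - h₃₃))`. -/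
theorem integral_log_six_sub_trace (H : Matrix (Fin 3) (Fin 3) ℝ)
    (hH : H * Hᵀ = 1) (hdet : H.det = 1) :
    (1 / (2 * π)) * ∫ φ in (0:ℝ)..(2 * π),
        Real.log (6 - 2 * Matrix.trace (H * rotZ φ))
      = 2 * Real.log (Real.sqrt 2 + Real.sqrt (1 - H 2 2)) := by
  have ht : H 2 2 ≤ 1 := by
    have hrow : H 2 0 ^ 2 + H 2 1 ^ 2 + H 2 2 ^ 2 = 1 := by
      simpa [mul_apply, Fin.sum_univ_three, sq] using congrFun (congrFun hH 2) 2
    nlinarith [sq_nonneg (H 2 0), sq_nonneg (H 2 1)]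
  set u := √2
  set v := √(1 - H 2 2)
  have hu : u ^ 2 = 2 := sq_sqrt zero_le_two
  have hv : v ^ 2 = 1 - H 2 2 := sq_sqrt (sub_nonneg.mpr ht)
  have hp : 0 < u + v := by positivity
  have hqp : |u - v| ≤ u + v := (abs_sub _ _).trans_eq <| by
    rw [abs_of_nonneg (sqrt_nonneg _), abs_of_nonneg (sqrt_nonneg _)]
  have hbc : (2 * (H 0 0 + H 1 1)) ^ 2 + (2 * (H 0 1 - H 1 0)) ^ 2
      = (2 * (u + v) * (u - v)) ^ 2 := by
    linear_combination 4 * sq_add_add_sq_sub_eq_one_add_sq hH hdet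
      - 4 * (u ^ 2 - v ^ 2 + 1 + H 2 2) * (hu - hv)
  have hintegrand (φ : ℝ) : 6 - 2 * trace (H * rotZ φ) = (u + v) ^ 2 + (u - v) ^ 2
      - 2 * (H 0 0 + H 1 1) * cos φ - 2 * (H 0 1 - H 1 0) * sin φ := by
    rw [trace_mul_rotZ]
    linear_combination -2 * hu - 2 * hv
  simp_rw [hintegrand]
  rw [integral_log_sq_add_sq_sub_mul_cos_sub_mul_sin hp hqp hbc]
  field_simp
  ring
end

section
/- The function $f(t) = -\log\left(1 + \sqrt{\frac{1-t}{2}}\right)$ is strictly absolutely monotone on $[-1,1)$: for every $n \geq 1$, the $n$th derivative $f^{(n)}(t)$ exists and is strictly positive for all $t \in (-1, 1)$. -/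
open Real Set

/-!
With `u(t) = √((1 - t)/2)` one has `u' = -1/(4u)` on `t < 1`, so `f' = 1/(4u(1 + u))`, and
differentiating `u^(-a)(1 + u)^(-b)` gives
`(a/4) u^(-a-2)(1 + u)^(-b) + (b/4) u^(-a-1)(1 + u)^(-b-1)`.
Hence every derivative of `f` is a positive combination of the positive functions
`u^(-a)(1 + u)^(-b)` with `a, b ≥ 1`.
-/

inductive PositiveCombination (S : Set (ℝ → ℝ)) : (ℝ → ℝ) → Prop
  | of {F : ℝ → ℝ} (hF : F ∈ S) : PositiveCombination S F
  | smul {c : ℝ} (hc : 0 < c) {F : ℝ → ℝ} (hF : PositiveCombination S F) :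
      PositiveCombination S (c • F)
  | add {F G : ℝ → ℝ} (hF : PositiveCombination S F) (hG : PositiveCombination S G) :
      PositiveCombination S (F + G)

namespace PositiveCombination

variable {S : Set (ℝ → ℝ)} {U : Set ℝ} {F : ℝ → ℝ}

theorem pos (hS : ∀ G ∈ S, ∀ t ∈ U, 0 < G t) (hF : PositiveCombination S F) :
    ∀ t ∈ U, 0 < F t := by
  induction hF with
  | of hG => exact hS _ hG
  | smul hc _ ih => exact fun t ht => mul_pos hc (ih t ht)
  | add _ _ ihF ihG => exact fun t ht => add_pos (ihF t ht) (ihG t ht)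

theorem exists_hasDerivAt
    (hS : ∀ G ∈ S, ∃ G', PositiveCombination S G' ∧ ∀ t ∈ U, HasDerivAt G (G' t) t)
    (hF : PositiveCombination S F) :
    ∃ F', PositiveCombination S F' ∧ ∀ t ∈ U, HasDerivAt F (F' t) t := by
  induction hF with
  | of hG => exact hS _ hG
  | @smul c hc _ _ ih =>
    obtain ⟨F', hF', hd⟩ := ih
    exact ⟨c • F', hF'.smul hc, fun t ht => (hd t ht).const_smul c⟩
  | add _ _ ihF ihG =>
    obtain ⟨F', hF', hdF⟩ := ihF
    obtain ⟨G', hG', hdG⟩ := ihG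
    exact ⟨F' + G', hF'.add hG', fun t ht => (hdF t ht).add (hdG t ht)⟩

end PositiveCombination

theorem exists_hasDerivAt_iteratedDeriv {U : Set ℝ} (hU : IsOpen U) {P : (ℝ → ℝ) → Prop}
    (hP : ∀ F, P F → ∃ F', P F' ∧ ∀ t ∈ U, HasDerivAt F (F' t) t) {f : ℝ → ℝ}
    (hf : ∃ f', P f' ∧ ∀ t ∈ U, HasDerivAt f (f' t) t) :
    ∀ n, ∃ F', P F' ∧ ∀ t ∈ U, HasDerivAt (iteratedDeriv n f) (F' t) t := by
  intro n
  induction n with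
  | zero => simpa only [iteratedDeriv_zero] using hf
  | succ n ih =>
    obtain ⟨F, hF, hd⟩ := ih
    obtain ⟨F', hF', hd'⟩ := hP F hF
    refine ⟨F', hF', fun t ht => (hd' t ht).congr_of_eventuallyEq ?_⟩
    filter_upwards [hU.mem_nhds ht] with x hx
    rw [iteratedDeriv_succ, (hd x hx).deriv]

noncomputable def halfSqrt (t : ℝ) : ℝ := √((1 - t) / 2)

theorem halfSqrt_pos {t : ℝ} (ht : t < 1) : 0 < halfSqrt t :=
  Real.sqrt_pos.2 (by linarith)

theorem hasDerivAt_halfSqrt {t : ℝ} (ht : t < 1) :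
    HasDerivAt halfSqrt (-(4 * halfSqrt t)⁻¹) t := by
  have hlin : HasDerivAt (fun t : ℝ => (1 - t) / 2) (-1 / 2) t := by
    simpa using ((hasDerivAt_id t).const_sub 1).div_const 2
  refine (hlin.sqrt (by linarith)).congr_deriv ?_
  rw [halfSqrt]
  field_simp
  ring

noncomputable def halfSqrtMonomial (a b : ℕ) (t : ℝ) : ℝ :=
  (halfSqrt t ^ (a + 1) * (1 + halfSqrt t) ^ (b + 1))⁻¹

theorem halfSqrtMonomial_pos (a b : ℕ) {t : ℝ} (ht : t < 1) : 0 < halfSqrtMonomial a b t := by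
  have := halfSqrt_pos ht
  unfold halfSqrtMonomial
  positivity

theorem hasDerivAt_halfSqrtMonomial (a b : ℕ) {t : ℝ} (ht : t < 1) :
    HasDerivAt (halfSqrtMonomial a b)
      ((a + 1) / 4 * halfSqrtMonomial (a + 2) b t
        + (b + 1) / 4 * halfSqrtMonomial (a + 1) (b + 1) t) t := by
  have hu := hasDerivAt_halfSqrt ht
  have hu_pos := halfSqrt_pos ht
  have hne : halfSqrt t ^ (a + 1) * (1 + halfSqrt t) ^ (b + 1) ≠ 0 := by positivity
  refine ((hu.pow (a + 1)).mul ((hu.const_add 1).pow (b + 1))).inv hne |>.congr_deriv ?_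
  simp only [halfSqrtMonomial, Nat.add_sub_cancel, Pi.mul_apply, Pi.pow_apply]
  push_cast
  field_simp
  ring

theorem hasDerivAt_neg_log_one_add_halfSqrt {t : ℝ} (ht : t < 1) :
    HasDerivAt (fun t => -log (1 + halfSqrt t)) (4⁻¹ * halfSqrtMonomial 0 0 t) t := by
  have hu_pos := halfSqrt_pos ht
  refine (((hasDerivAt_halfSqrt ht).const_add 1).log (by positivity)).neg.congr_deriv ?_
  simp only [halfSqrtMonomial]
  field_simp
  ring

theorem exists_positiveCombination_hasDerivAt_halfSqrtMonomial {F : ℝ → ℝ}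
    (hF : PositiveCombination (range fun p : ℕ × ℕ => halfSqrtMonomial p.1 p.2) F) :
    ∃ F', PositiveCombination (range fun p : ℕ × ℕ => halfSqrtMonomial p.1 p.2) F' ∧
      ∀ t ∈ Iio 1, HasDerivAt F (F' t) t := by
  refine hF.exists_hasDerivAt ?_
  rintro _ ⟨⟨a, b⟩, rfl⟩
  exact ⟨((a + 1 : ℝ) / 4) • halfSqrtMonomial (a + 2) b
      + ((b + 1 : ℝ) / 4) • halfSqrtMonomial (a + 1) (b + 1),
    .add (.smul (by positivity) (.of ⟨(a + 2, b), rfl⟩))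
      (.smul (by positivity) (.of ⟨(a + 1, b + 1), rfl⟩)),
    fun t ht => hasDerivAt_halfSqrtMonomial a b ht⟩

/-- The function `f(t) = -log(1 + √((1-t)/2))` is strictly absolutely monotone on
`[-1,1)`: for every `n ≥ 1`, the `n`th derivative exists and is strictly positive
on `(-1,1)`. -/
theorem kernel_strictly_absolutely_monotone
    (f : ℝ → ℝ) (hf : ∀ t, f t = -Real.log (1 + Real.sqrt ((1 - t) / 2))) :
    ∀ n : ℕ, 1 ≤ n → ∀ t ∈ Set.Ioo (-1 : ℝ) 1,
      DifferentiableAt ℝ (iteratedDeriv (n - 1) f) t ∧ 0 < iteratedDeriv n f t := by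
  intro n hn t ht
  obtain ⟨n, rfl⟩ := Nat.exists_eq_add_of_le' hn
  obtain rfl : f = fun t => -log (1 + halfSqrt t) := funext hf
  obtain ⟨F, hF, hderiv⟩ := exists_hasDerivAt_iteratedDeriv isOpen_Iio
    (fun _ => exists_positiveCombination_hasDerivAt_halfSqrtMonomial)
    ⟨(4 : ℝ)⁻¹ • halfSqrtMonomial 0 0, .smul (by norm_num) (.of ⟨(0, 0), rfl⟩),
      fun t ht => hasDerivAt_neg_log_one_add_halfSqrt ht⟩ n
  have htn := hderiv t ht.2
  refine ⟨by simpa using htn.differentiableAt, ?_⟩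
  rw [iteratedDeriv_succ, htn.deriv]
  exact hF.pos (by rintro _ ⟨⟨a, b⟩, rfl⟩ s hs; exact halfSqrtMonomial_pos a b hs) t ht.2
end

section
/- Define $\gamma_{r,1}(u) = \frac{\left(1 - \frac{ru^2}{(1+u^2)^r - 1}\right)^2 (1+u^2)^{r-2}}{(1+u^2)^r - 1}$ and $\gamma_{r,2}(u) = \frac{\left(1 - \frac{ru^2(1+u^2)^{r-1}}{(1+u^2)^r - 1}\right)^2}{(1+u^2)^r - 1}$ for $u > 0$, $r \geq 2$. Then for all $u \geq r^{-1/2}$ we have $\gamma_{r,1}(u) \leq \frac{2}{(1+u^2)^2}$ and $\gamma_{r,2}(u) \leq \frac{8 r^2 u^4}{(1+u^2)^{r+2}}$. -/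
open Real

/-- Bounds for `γ_{r,1}` and `γ_{r,2}` in the range `u ≥ r^{-1/2}`:
`γ_{r,1}(u) ≤ 2/(1+u²)²` and `γ_{r,2}(u) ≤ 8r²u⁴/(1+u²)^{r+2}`. -/
theorem gamma_bounds (r : ℕ) (hr : 2 ≤ r) (u : ℝ)
    (hu : ((r : ℝ)) ^ (-(1 : ℝ) / 2) ≤ u) :
    (1 - (r : ℝ) * u ^ 2 / ((1 + u ^ 2) ^ r - 1)) ^ 2 * (1 + u ^ 2) ^ (r - 2)
          / ((1 + u ^ 2) ^ r - 1)
        ≤ 2 / (1 + u ^ 2) ^ 2 ∧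
      (1 - (r : ℝ) * u ^ 2 * (1 + u ^ 2) ^ (r - 1) / ((1 + u ^ 2) ^ r - 1)) ^ 2
          / ((1 + u ^ 2) ^ r - 1)
        ≤ 8 * (r : ℝ) ^ 2 * u ^ 4 / (1 + u ^ 2) ^ (r + 2) := by
  have hr0 : (0:ℝ) < (r:ℝ) := by
    have : (2:ℝ) ≤ (r:ℝ) := by exact_mod_cast hr
    linarith
  have hu0 : 0 < u := lt_of_lt_of_le (by positivity) hu
  have hu2 : 1 / (r:ℝ) ≤ u ^ 2 := by
    have h1 : (0:ℝ) < ((r:ℝ)) ^ (-(1:ℝ)/2) := by positivity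
    have h2 := pow_le_pow_left₀ h1.le hu 2
    calc 1/(r:ℝ) = ((r:ℝ) ^ (-(1:ℝ)/2))^2 := by
          rw [← Real.rpow_natCast ((r:ℝ) ^ (-(1:ℝ)/2)) 2,
            ← Real.rpow_mul hr0.le]
          norm_num
          rw [Real.rpow_neg_one]
      _ ≤ u^2 := h2
  set a : ℝ := 1 + u ^ 2 with ha
  have ha1 : 1 < a := by nlinarith
  have ha0 : 0 < a := by linarith
  have h2a : (2:ℝ) ≤ a ^ r := by
    have hb : 1 + (r:ℝ) * (1/(r:ℝ)) ≤ (1 + 1/(r:ℝ)) ^ r :=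
      one_add_mul_le_pow (by have := one_div_pos.mpr hr0; linarith) r
    have hrr : (r:ℝ) * (1/(r:ℝ)) = 1 := by field_simp
    have hle : (1 + 1/(r:ℝ)) ^ r ≤ a ^ r := by
      apply pow_le_pow_left₀ (by positivity)
      nlinarith
    rw [hrr] at hb
    linarith
  have hD : 0 < a ^ r - 1 := by linarith
  have hBern : 1 + (r:ℝ) * u ^ 2 ≤ a ^ r :=
    one_add_mul_le_pow (by nlinarith : (-2:ℝ) ≤ u ^ 2) r
  -- sum bound for geometric sum
  have hX : a ^ r - 1 ≤ (r:ℝ) * u ^ 2 * a ^ (r - 1) := by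
    have hgs : (∑ i ∈ Finset.range r, a ^ i) * (a - 1) = a ^ r - 1 :=
      geom_sum_mul a r
    have hsum : (∑ i ∈ Finset.range r, a ^ i) ≤ (r:ℝ) * a ^ (r - 1) := by
      have := Finset.sum_le_card_nsmul (Finset.range r) (fun i => a ^ i)
        (a ^ (r - 1)) (fun i hi => by
          apply pow_le_pow_right₀ ha1.le
          have := Finset.mem_range.mp hi
          omega)
      simpa [nsmul_eq_mul] using this
    have hau : a - 1 = u ^ 2 := by ring
    calc a ^ r - 1 = (∑ i ∈ Finset.range r, a ^ i) * (a - 1) := hgs.symm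
      _ ≤ ((r:ℝ) * a ^ (r - 1)) * (a - 1) := by
          apply mul_le_mul_of_nonneg_right hsum (by nlinarith)
      _ = (r:ℝ) * u ^ 2 * a ^ (r - 1) := by rw [hau]; ring
  constructor
  · -- part 1
    have h01 : 0 ≤ (r:ℝ) * u ^ 2 / (a ^ r - 1) := by positivity
    have h11 : (r:ℝ) * u ^ 2 / (a ^ r - 1) ≤ 1 :=
      (div_le_one hD).mpr (by linarith)
    have hsq : (1 - (r:ℝ) * u ^ 2 / (a ^ r - 1)) ^ 2 ≤ 1 := by nlinarith
    have step1 : (1 - (r:ℝ) * u ^ 2 / (a ^ r - 1)) ^ 2 * a ^ (r - 2) / (a ^ r - 1)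
        ≤ 1 * a ^ (r - 2) / (a ^ r - 1) := by
      gcongr
    refine step1.trans ?_
    rw [one_mul, div_le_div_iff₀ hD (by positivity)]
    have hpow : a ^ (r - 2) * a ^ 2 = a ^ r := by
      rw [← pow_add]; congr 1; omega
    nlinarith
  · -- part 2
    have hXD : 1 ≤ (r:ℝ) * u ^ 2 * a ^ (r - 1) / (a ^ r - 1) :=
      (one_le_div hD).mpr hX
    have hsq2 : (1 - (r:ℝ) * u ^ 2 * a ^ (r - 1) / (a ^ r - 1)) ^ 2
        ≤ ((r:ℝ) * u ^ 2 * a ^ (r - 1) / (a ^ r - 1)) ^ 2 := by nlinarith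
    have step1 : (1 - (r:ℝ) * u ^ 2 * a ^ (r - 1) / (a ^ r - 1)) ^ 2 / (a ^ r - 1)
        ≤ ((r:ℝ) * u ^ 2 * a ^ (r - 1) / (a ^ r - 1)) ^ 2 / (a ^ r - 1) := by
      gcongr
    refine step1.trans ?_
    rw [div_pow, div_div, div_le_div_iff₀ (by positivity) (by positivity)]
    have hkey : ((r:ℝ) * u ^ 2 * a ^ (r - 1)) ^ 2 * a ^ (r + 2)
        = (r:ℝ) ^ 2 * u ^ 4 * a ^ (3 * r) := by
      have hpow2 : (a ^ (r - 1)) ^ 2 * a ^ (r + 2) = a ^ (3 * r) := by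
        rw [← pow_mul, ← pow_add]; congr 1; omega
      calc ((r:ℝ) * u ^ 2 * a ^ (r - 1)) ^ 2 * a ^ (r + 2)
          = (r:ℝ) ^ 2 * u ^ 4 * ((a ^ (r - 1)) ^ 2 * a ^ (r + 2)) := by ring
        _ = (r:ℝ) ^ 2 * u ^ 4 * a ^ (3 * r) := by rw [hpow2]
    rw [hkey]
    have hcube : a ^ (3 * r) ≤ 8 * (a ^ r - 1) ^ 3 := by
      have h1 : a ^ r ≤ 2 * (a ^ r - 1) := by linarith
      have h2 : (a ^ r) ^ 3 ≤ (2 * (a ^ r - 1)) ^ 3 :=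
        pow_le_pow_left₀ (by positivity) h1 3
      calc a ^ (3 * r) = (a ^ r) ^ 3 := by rw [← pow_mul]; ring_nf
        _ ≤ (2 * (a ^ r - 1)) ^ 3 := h2
        _ = 8 * (a ^ r - 1) ^ 3 := by ring
    have hru : 0 ≤ (r:ℝ) ^ 2 * u ^ 4 := by positivity
    calc (r:ℝ) ^ 2 * u ^ 4 * a ^ (3 * r)
        ≤ (r:ℝ) ^ 2 * u ^ 4 * (8 * (a ^ r - 1) ^ 3) :=
          mul_le_mul_of_nonneg_left hcube hru
      _ = 8 * (r:ℝ) ^ 2 * u ^ 4 * ((a ^ r - 1) ^ 2 * (a ^ r - 1)) := by ring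
end
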